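/- arXiv:1705.09391 — 4 statements merged into one kernel-verified Lean document; each statement's English description precedes it below -/
import Mathlib

section
/- Let n > 0 and let α, α', β be finite types with decidable equality. Let x' : Fin n → α', y : Fin n → β, and let π : α' → α be any map, with x = π ∘ x'. Then the permutation-model expectation of empirical mutual information is monotone under the projection: m̂₀(π ∘ x', y) ≤ m̂₀(x', y), i.e., (1/n!)·Σ_{σ ∈ Perm(Fin n)} Î(π ∘ x', y ∘ σ) ≤ (1/n!)·Σ_{σ ∈ Perm(Fin n)} Î(x', y ∘ σ). -/
open Finset

/-- Empirical mutual information between `x : Fin n → α` and `y : Fin n → β`,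
`Î(x,y) = Σ_{v,w} (c(v,w)/n)·log(c(v,w)·n/(a(v)·b(w)))`, terms with `c(v,w)=0` being `0`
(which holds automatically since `c(v,w)/n = 0` then). -/
noncomputable def empMI {n : ℕ} {α β : Type*} [Fintype α] [DecidableEq α]
    [Fintype β] [DecidableEq β] (x : Fin n → α) (y : Fin n → β) : ℝ :=
  ∑ v : α, ∑ w : β,
    (((univ.filter fun t => x t = v ∧ y t = w).card : ℝ) / n) *
      Real.log ((((univ.filter fun t => x t = v ∧ y t = w).card : ℝ) * n) /
        (((univ.filter fun t => x t = v).card : ℝ) *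
          ((univ.filter fun t => y t = w).card : ℝ)))

/-- Permutation-model expectation of the empirical mutual information:
`m̂₀(x,y) = (1/n!)·Σ_{σ ∈ Perm(Fin n)} Î(x, y∘σ)`. -/
noncomputable def permExpMI {n : ℕ} {α β : Type*} [Fintype α] [DecidableEq α]
    [Fintype β] [DecidableEq β] (x : Fin n → α) (y : Fin n → β) : ℝ :=
  (1 / (n.factorial : ℝ)) * ∑ σ : Equiv.Perm (Fin n), empMI x (y ∘ σ)

/-!
For every fixed sample, coarsening `x'` to `pr ∘ x'` cannot increase the empirical mutual
information: the cells `(v', w)` with `pr v' = v` merge into the cell `(v, w)`, and the log-sum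
inequality `(∑ c) log (∑ c / ∑ a) ≤ ∑ c log (c / a)` says merging only lowers the sum. Applying
this to each permuted target `y ∘ σ` and averaging gives the claim.
-/

open Real

theorem mul_log_div_add_sub_le {c a r : ℝ} (hc : 0 ≤ c) (ha : 0 ≤ a) (hac : a = 0 → c = 0)
    (hr : 0 < r) : c * log r + (c - a * r) ≤ c * log (c / a) := by
  rcases hc.eq_or_lt with rfl | hc
  · simpa using mul_nonneg ha hr.le
  have ha : 0 < a := ha.lt_of_ne (Ne.symm fun h => hc.ne' (hac h))
  have key := one_sub_inv_le_log_of_pos (show 0 < c / (a * r) by positivity)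
  rw [log_div hc.ne' (by positivity), log_mul ha.ne' hr.ne'] at key
  have : c - a * r ≤ c * (log c - (log a + log r)) :=
    calc c - a * r = c * (1 - (c / (a * r))⁻¹) := by field_simp
      _ ≤ _ := mul_le_mul_of_nonneg_left key hc.le
  rw [log_div hc.ne' ha.ne']
  linarith

theorem sum_mul_log_sum_div_sum_le {ι : Type*} (s : Finset ι) {c a : ι → ℝ}
    (hc : ∀ i ∈ s, 0 ≤ c i) (ha : ∀ i ∈ s, 0 ≤ a i) (hac : ∀ i ∈ s, a i = 0 → c i = 0) :
    (∑ i ∈ s, c i) * log ((∑ i ∈ s, c i) / ∑ i ∈ s, a i) ≤ ∑ i ∈ s, c i * log (c i / a i) := by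
  rcases (sum_nonneg hc).eq_or_lt with hC | hC
  · rw [← hC, zero_mul]
    refine sum_nonneg fun i hi => ?_
    rw [(sum_eq_zero_iff_of_nonneg hc).1 hC.symm i hi, zero_mul]
  have hA : 0 < ∑ i ∈ s, a i := by
    refine (sum_nonneg ha).lt_of_ne fun hA => hC.ne' (sum_eq_zero fun i hi => hac i hi ?_)
    exact (sum_eq_zero_iff_of_nonneg ha).1 hA.symm i hi
  calc (∑ i ∈ s, c i) * log ((∑ i ∈ s, c i) / ∑ i ∈ s, a i)
      = ∑ i ∈ s, (c i * log ((∑ i ∈ s, c i) / ∑ i ∈ s, a i)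
          + (c i - a i * ((∑ i ∈ s, c i) / ∑ i ∈ s, a i))) := by
        rw [sum_add_distrib, sum_sub_distrib, ← sum_mul, ← sum_mul, mul_div_cancel₀ _ hA.ne']
        ring
    _ ≤ ∑ i ∈ s, c i * log (c i / a i) :=
        sum_le_sum fun i hi => mul_log_div_add_sub_le (hc i hi) (ha i hi) (hac i hi) (by positivity)

theorem sum_div_mul_log_mul_div_le {ι : Type*} (s : Finset ι) {c a : ι → ℝ} {b n : ℝ}
    (hn : 0 ≤ n) (hc : ∀ i ∈ s, 0 ≤ c i) (hca : ∀ i ∈ s, c i ≤ a i) (hcb : ∀ i ∈ s, c i ≤ b) :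
    (∑ i ∈ s, c i) / n * log ((∑ i ∈ s, c i) * n / ((∑ i ∈ s, a i) * b)) ≤
      ∑ i ∈ s, c i / n * log (c i * n / (a i * b)) := by
  rcases hn.eq_or_lt with rfl | hn
  · simp
  -- Absorbing `b / n` into `a` puts the cell into the form of the log-sum inequality.
  have scale : ∀ C A : ℝ, C / n * log (C * n / (A * b)) = C * log (C / (A * b / n)) / n := by
    intro C A
    rw [div_div_eq_mul_div]
    ring
  simp only [scale]
  rw [← sum_div, sum_mul s a b, sum_div s (fun i => a i * b) n]
  gcongr
  refine sum_mul_log_sum_div_sum_le s hc (fun i hi => ?_) (fun i hi h => ?_)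
  · have := (hc i hi).trans (hcb i hi)
    have := (hc i hi).trans (hca i hi)
    positivity
  · rcases mul_eq_zero.1 (div_eq_zero_iff.1 h |>.resolve_right hn.ne') with h | h
    · exact le_antisymm (h ▸ hca i hi) (hc i hi)
    · exact le_antisymm (h ▸ hcb i hi) (hc i hi)

theorem card_filter_comp_and_eq_sum {ι κ μ : Type*} [Fintype ι] [Fintype κ] [DecidableEq κ]
    [DecidableEq μ] (f : ι → κ) (g : κ → μ) (P : ι → Prop) [DecidablePred P] (v : μ) :
    #{t | g (f t) = v ∧ P t} = ∑ v' with g v' = v, #{t | f t = v' ∧ P t} := by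
  rw [card_eq_sum_card_fiberwise (f := f) (t := {v' | g v' = v}) fun t ht => by simp_all]
  refine sum_congr rfl fun v' hv' => congrArg card ?_
  ext t
  simp only [mem_filter, mem_univ, true_and] at hv' ⊢
  constructor
  · exact fun h => ⟨h.2, h.1.2⟩
  · rintro ⟨rfl, h⟩
    exact ⟨⟨hv', h⟩, rfl⟩

theorem empMI_comp_le {n : ℕ} {α α' β : Type*} [Fintype α] [DecidableEq α] [Fintype α']
    [DecidableEq α'] [Fintype β] [DecidableEq β] (x' : Fin n → α') (y : Fin n → β)
    (pr : α' → α) : empMI (pr ∘ x') y ≤ empMI x' y := by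
  unfold empMI
  conv_rhs => rw [← sum_fiberwise univ pr]
  refine sum_le_sum fun v _ => ?_
  rw [sum_comm]
  refine sum_le_sum fun w _ => ?_
  have hmarg := card_filter_comp_and_eq_sum x' pr (fun _ => True) v
  simp only [and_true] at hmarg
  simp only [Function.comp_apply, card_filter_comp_and_eq_sum x' pr (y · = w) v, hmarg,
    Nat.cast_sum]
  refine sum_div_mul_log_mul_div_le _ n.cast_nonneg (fun _ _ => Nat.cast_nonneg _)
    (fun _ _ => ?_) (fun _ _ => ?_) <;>
  exact_mod_cast card_le_card (monotone_filter_right _ fun _ h => by simp_all)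

theorem permExpMI_proj_le_general {n : ℕ} {α α' β : Type*}
    [Fintype α] [DecidableEq α] [Fintype α'] [DecidableEq α']
    [Fintype β] [DecidableEq β]
    (x' : Fin n → α') (y : Fin n → β) (pr : α' → α) (x : Fin n → α) (hx : x = pr ∘ x') :
    permExpMI x y ≤ permExpMI x' y := by
  subst hx
  unfold permExpMI
  gcongr with σ
  exact empMI_comp_le x' (y ∘ σ) pr

/-- The permutation-model expectation of empirical mutual information is monotone
under projections of the first argument: `m̂₀(π ∘ x', y) ≤ m̂₀(x', y)`. -/
theorem permExpMI_proj_le {n : ℕ} (hn : 0 < n) {α α' β : Type*}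
    [Fintype α] [DecidableEq α] [Fintype α'] [DecidableEq α']
    [Fintype β] [DecidableEq β]
    (x' : Fin n → α') (y : Fin n → β) (pr : α' → α) (x : Fin n → α) (hx : x = pr ∘ x') :
    permExpMI x y ≤ permExpMI x' y :=
  permExpMI_proj_le_general x' y pr x hx
end

section
/- Let n > 0, let α, β be finite types with decidable equality, and let x : Fin n → α, y : Fin n → β with marginals a(v) = |{t : x t = v}| and b(w) = |{t : y t = w}|. Fix v ∈ α, w ∈ β and a natural number k with k ≤ a(v). Then the number of permutations σ of Fin n with |{t : x t = v ∧ y(σ t) = w}| = k, multiplied by the binomial coefficient C(n, a(v)), equals n! · C(b(w), k) · C(n − b(w), a(v) − k). Equivalently, under a uniformly random permutation σ, the joint cell count c_{vw}(σ) is hypergeometrically distributed with a(v) draws, b(w) total successes, and population size n. -/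
/-!
Let `A = {t | x t = v}` and `B = {t | y t = w}`, so that the cell count of `σ` is `|σ(A) ∩ B|`.
Permutations act transitively on the `a`-subsets of `Fin n`, so `σ ↦ σ(A)` takes every
`a`-subset equally often, namely `n! / C(n, a)` times. Counting permutations therefore reduces to
counting `a`-subsets `S` with `|S ∩ B| = k`, and such an `S` is a `k`-subset of `B` together with
an `(a - k)`-subset of its complement.
-/

open Finset
open scoped Pointwise

namespace MulAction

variable {G X : Type*} [Group G] [Fintype G] [MulAction G X] [DecidableEq X]

theorem card_filter_smul_eq_smul (x₀ : X) (h : G) :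
    #{g : G | g • x₀ = h • x₀} = #{g : G | g • x₀ = x₀} := by
  refine card_nbij' (h⁻¹ * ·) (h * ·) ?_ ?_ ?_ ?_ <;> intro g hg
  · simp_all [mul_smul]
  · simp_all [mul_smul]
  · simp
  · simp

theorem card_filter_smul_mul_card_orbit (x₀ : X) {s : Finset X}
    (hs : ∀ x, x ∈ s ↔ ∃ g : G, g • x₀ = x) (P : X → Prop) [DecidablePred P] :
    #{g : G | P (g • x₀)} * #s = Fintype.card G * #{x ∈ s | P x} := by
  have hfiber : ∀ (Q : X → Prop) [DecidablePred Q],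
      #{g : G | Q (g • x₀)} = #{x ∈ s | Q x} * #{g : G | g • x₀ = x₀} := by
    intro Q _
    rw [card_eq_sum_card_fiberwise (f := (· • x₀)) (t := {x ∈ s | Q x})
      (fun g hg => by simp_all)]
    refine sum_const_nat fun x hx => ?_
    obtain ⟨h, rfl⟩ := (hs x).1 (mem_filter.1 hx).1
    rw [filter_filter, ← card_filter_smul_eq_smul x₀ h]
    congr 1
    exact filter_congr fun g _ => ⟨And.right, fun hg => ⟨hg ▸ (mem_filter.1 hx).2, hg⟩⟩
  have htotal := hfiber fun _ => True
  simp only [filter_true, card_univ] at htotal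
  rw [hfiber P, htotal]
  ring

end MulAction

section

variable {ι : Type*} [DecidableEq ι]

theorem card_filter_card_inter_eq_choose_mul_choose [Fintype ι] (B : Finset ι) {a k : ℕ}
    (hk : k ≤ a) :
    #{S ∈ powersetCard a univ | #(S ∩ B) = k} =
      (#B).choose k * (Fintype.card ι - #B).choose (a - k) := by
  rw [← card_compl, ← card_powersetCard, ← card_powersetCard, ← card_product]
  have split : ∀ P Q, P ⊆ B → Q ⊆ Bᶜ → (P ∪ Q) ∩ B = P ∧ (P ∪ Q) \ B = Q := by
    intro P Q hP hQ
    rw [subset_compl_iff_disjoint_right] at hQ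
    rw [union_inter_distrib_right, inter_eq_left.2 hP, disjoint_iff_inter_eq_empty.1 hQ,
      union_empty, union_sdiff_distrib, sdiff_eq_empty_iff_subset.2 hP, hQ.sdiff_eq_left,
      empty_union]
    exact ⟨rfl, rfl⟩
  refine card_nbij' (fun S => (S ∩ B, S \ B)) (fun p => p.1 ∪ p.2) ?_ ?_ ?_ ?_
  · intro S hS
    simp only [mem_coe, mem_filter, mem_product, mem_powersetCard] at hS ⊢
    refine ⟨⟨inter_subset_right, hS.2⟩, fun u => by simp +contextual, ?_⟩
    have := card_inter_add_card_sdiff S B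
    omega
  · rintro ⟨P, Q⟩ hPQ
    obtain ⟨⟨hPB, hPk⟩, hQB, hQk⟩ := by
      simpa only [mem_coe, mem_product, mem_powersetCard] using hPQ
    have hdisj : Disjoint P Q :=
      disjoint_of_subset_left hPB (subset_compl_iff_disjoint_left.1 hQB)
    simp only [mem_coe, mem_filter, mem_powersetCard, subset_univ, true_and,
      card_union_of_disjoint hdisj, (split P Q hPB hQB).1]
    omega
  · intro S _
    exact sup_inf_sdiff S B
  · rintro ⟨P, Q⟩ hPQ
    obtain ⟨⟨hPB, -⟩, hQB, -⟩ := by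
      simpa only [mem_coe, mem_product, mem_powersetCard] using hPQ
    simp only [split P Q hPB hQB]

namespace Equiv.Perm

theorem exists_smul_finset_eq_of_card_eq {A S : Finset ι} (h : #S = #A) :
    ∃ σ : Perm ι, σ • A = S := by
  obtain ⟨σ, hσ⟩ := (Set.powersetCard.isPretransitive (α := ι) (n := #A)).exists_smul_eq
    ⟨A, rfl⟩ ⟨S, h⟩
  exact ⟨σ, congrArg Subtype.val hσ⟩

theorem card_filter_mem_eq_card_smul_inter (σ : Perm ι) (A B : Finset ι) :
    #{t ∈ A | σ t ∈ B} = #(σ • A ∩ B) := by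
  rw [← card_smul_finset σ]
  congr 1
  ext u
  simp [← inv_smul_mem_iff]

theorem card_filter_card_smul_inter_mul_choose [Fintype ι] (A B : Finset ι) {k : ℕ}
    (hk : k ≤ #A) :
    #{σ : Perm ι | #(σ • A ∩ B) = k} * (Fintype.card ι).choose #A =
      (Fintype.card ι).factorial * ((#B).choose k * (Fintype.card ι - #B).choose (#A - k)) := by
  have horbit : ∀ S, S ∈ powersetCard #A univ ↔ ∃ σ : Perm ι, σ • A = S := by
    intro S
    rw [mem_powersetCard_univ]
    exact ⟨exists_smul_finset_eq_of_card_eq, fun ⟨σ, hσ⟩ => hσ ▸ card_smul_finset σ A⟩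
  rw [← card_filter_card_inter_eq_choose_mul_choose B hk, ← Fintype.card_perm, ← card_univ,
    ← card_powersetCard]
  exact MulAction.card_filter_smul_mul_card_orbit A horbit fun S => #(S ∩ B) = k

end Equiv.Perm

end

theorem card_perms_cell_count_eq_hypergeom_general {n : ℕ} {α β : Type*}
    [DecidableEq α] [DecidableEq β]
    (x : Fin n → α) (y : Fin n → β) (v : α) (w : β) (k : ℕ)
    (hk : k ≤ (univ.filter fun t => x t = v).card) :
    (univ.filter fun σ : Equiv.Perm (Fin n) =>
        (univ.filter fun t => x t = v ∧ y (σ t) = w).card = k).card *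
      Nat.choose n (univ.filter fun t => x t = v).card =
    n.factorial * Nat.choose (univ.filter fun t => y t = w).card k *
      Nat.choose (n - (univ.filter fun t => y t = w).card)
        ((univ.filter fun t => x t = v).card - k) := by
  set A : Finset (Fin n) := {t | x t = v}
  set B : Finset (Fin n) := {t | y t = w}
  have hcell : ∀ σ : Equiv.Perm (Fin n), #{t | x t = v ∧ y (σ t) = w} = #(σ • A ∩ B) := by
    intro σ
    rw [← Equiv.Perm.card_filter_mem_eq_card_smul_inter]
    congr 1
    ext t
    simp [A, B]
  simp only [hcell]
  simpa only [Fintype.card_fin, mul_assoc] using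
    Equiv.Perm.card_filter_card_smul_inter_mul_choose A B hk

/-- Under a uniformly random permutation `σ` of `Fin n`, the joint cell count
`c_{vw}(σ) = |{t : x t = v ∧ y (σ t) = w}|` is hypergeometrically distributed with `a(v)`
draws, `b(w)` total successes, and population size `n`: the number of permutations with
cell count `k`, times `C(n, a(v))`, equals `n! · C(b(w), k) · C(n − b(w), a(v) − k)`. -/
theorem card_perms_cell_count_eq_hypergeom {n : ℕ} (hn : 0 < n) {α β : Type*}
    [Fintype α] [DecidableEq α] [Fintype β] [DecidableEq β]
    (x : Fin n → α) (y : Fin n → β) (v : α) (w : β) (k : ℕ)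
    (hk : k ≤ (univ.filter fun t => x t = v).card) :
    (univ.filter fun σ : Equiv.Perm (Fin n) =>
        (univ.filter fun t => x t = v ∧ y (σ t) = w).card = k).card *
      Nat.choose n (univ.filter fun t => x t = v).card =
    n.factorial * Nat.choose (univ.filter fun t => y t = w).card k *
      Nat.choose (n - (univ.filter fun t => y t = w).card)
        ((univ.filter fun t => x t = v).card - k) :=
  card_perms_cell_count_eq_hypergeom_general x y v w k hk
end

section
/- Let n > 0, let α, β be finite types with decidable equality, and let x : Fin n → α, y : Fin n → β with marginals a(v) = |{t : x t = v}| and b(w) = |{t : y t = w}|. Then the permutation-model expectation of the empirical mutual information has the closed form m̂₀(x,y) = Σ_{v∈α} Σ_{w∈β} Σ_{k = max(0, a(v)+b(w)−n)}^{min(a(v), b(w))} h(k; a(v), b(w), n) · (k/n) · log(k·n/(a(v)·b(w))), where h(k; a, b, n) = C(b,k)·C(n−b, a−k)/C(n,a) is the hypergeometric probability mass function and terms with k = 0 are taken to be 0. -/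
open Finset

/-- Marginal counts `a(v) = |{t : x t = v}|`. -/
def margCount {n : ℕ} {α : Type*} [Fintype α] [DecidableEq α] (x : Fin n → α) (v : α) : ℕ :=
  (univ.filter fun t => x t = v).card

/-! The marginals of `y ∘ σ` do not depend on `σ`, and the joint count of `(v, w)` for `(x, y ∘ σ)`
is `#(σ • A ∩ B)` with `A = {x = v}`, `B = {y = w}`. As `σ` runs over `Perm (Fin n)`, the set
`σ • A` runs uniformly over the `#A`-subsets of `Fin n` (each one is hit by a coset of the
stabilizer of `A`), and exactly `C(b, k) · C(n - b, a - k)` of the `a`-subsets meet `B` in `k`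
points. So under the permutation model each joint count is hypergeometric, and the formula is
linearity of expectation. -/

open scoped Pointwise

namespace MulAction

variable {G X : Type*} [Group G] [Fintype G] [MulAction G X] [DecidableEq X]

theorem sum_smul_eq_card_stabilizer_nsmul {M : Type*} [AddCommMonoid M] (x : X) {s : Finset X}
    (hs : ∀ y, y ∈ s ↔ ∃ g : G, g • x = y) (F : X → M) :
    ∑ g : G, F (g • x) = #{g : G | g • x = x} • ∑ y ∈ s, F y := by
  rw [← sum_fiberwise_of_maps_to (g := (· • x)) (t := s) fun g _ ↦ (hs _).2 ⟨g, rfl⟩, smul_sum]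
  refine sum_congr rfl fun y hy ↦ ?_
  obtain ⟨τ, rfl⟩ := (hs y).1 hy
  rw [sum_congr rfl fun g hg ↦ congrArg F (mem_filter.1 hg).2, sum_const]
  congr 1
  refine card_nbij' (τ⁻¹ * ·) (τ * ·) ?_ ?_ ?_ ?_ <;> intro g <;> simp [mul_smul, inv_smul_eq_iff]

theorem sum_smul_div_card_eq {K : Type*} [Semifield K] [CharZero K] (x : X) {s : Finset X}
    (hs : ∀ y, y ∈ s ↔ ∃ g : G, g • x = y) (F : X → K) :
    (∑ g : G, F (g • x)) / Fintype.card G = (∑ y ∈ s, F y) / #s := by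
  have hcard : Fintype.card G = #{g : G | g • x = x} * #s := by
    simpa using sum_smul_eq_card_stabilizer_nsmul x hs fun _ ↦ (1 : ℕ)
  have hstab : #{g : G | g • x = x} ≠ 0 := card_ne_zero.2 ⟨1, by simp⟩
  have hs0 : #s ≠ 0 := card_ne_zero.2 ⟨x, (hs x).2 ⟨1, one_smul G x⟩⟩
  rw [sum_smul_eq_card_stabilizer_nsmul x hs, hcard, nsmul_eq_mul]
  push_cast
  field_simp

end MulAction

namespace Finset

variable {ι : Type*} [Fintype ι] [DecidableEq ι]

theorem card_filter_powersetCard_card_inter_eq (B : Finset ι) {a k : ℕ} (hk : k ≤ a) :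
    #{S ∈ powersetCard a (univ : Finset ι) | #(S ∩ B) = k} =
      (#B).choose k * (Fintype.card ι - #B).choose (a - k) := by
  rw [← card_compl, ← card_powersetCard, ← card_powersetCard, ← card_product]
  refine card_nbij' (fun S ↦ (S ∩ B, S \ B)) (fun P ↦ P.1 ∪ P.2) ?_ ?_ ?_ ?_
  · intro S hS
    simp only [coe_filter, mem_powersetCard, subset_univ, true_and, Set.mem_ofPred_eq] at hS
    have := card_inter_add_card_sdiff S B
    simp only [coe_product, Set.mem_prod, mem_coe, mem_powersetCard,
      subset_compl_iff_disjoint_right]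
    exact ⟨⟨inter_subset_right, hS.2⟩, sdiff_disjoint, by omega⟩
  · rintro ⟨T, U⟩ hP
    simp only [coe_product, Set.mem_prod, mem_coe, mem_powersetCard,
      subset_compl_iff_disjoint_right] at hP
    obtain ⟨⟨hTB, rfl⟩, hUB, hU⟩ := hP
    have hinter : (T ∪ U) ∩ B = T := by rw [disjoint_left] at hUB; grind
    have := card_union_of_disjoint (disjoint_of_subset_left hTB hUB.symm)
    simp only [coe_filter, mem_powersetCard, subset_univ, true_and, Set.mem_ofPred_eq, hinter,
      and_true]
    omega
  · exact fun S _ ↦ sup_inf_sdiff S B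
  · rintro ⟨T, U⟩ hP
    simp only [coe_product, Set.mem_prod, mem_coe, mem_powersetCard,
      subset_compl_iff_disjoint_right] at hP
    rw [disjoint_left] at hP
    ext1 <;> grind

theorem sum_powersetCard_card_inter {M : Type*} [AddCommMonoid M] (B : Finset ι) (a : ℕ)
    (f : ℕ → M) :
    ∑ S ∈ powersetCard a (univ : Finset ι), f #(S ∩ B) =
      ∑ k ∈ Icc (a + #B - Fintype.card ι) (min a #B),
        ((#B).choose k * (Fintype.card ι - #B).choose (a - k)) • f k := by
  have hmaps : ∀ S ∈ powersetCard a (univ : Finset ι),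
      #(S ∩ B) ∈ Icc (a + #B - Fintype.card ι) (min a #B) := by
    intro S hS
    rw [mem_powersetCard] at hS
    have := card_union_add_card_inter S B
    have := card_le_univ (S ∪ B)
    have := card_le_card (inter_subset_left (s₁ := S) (s₂ := B))
    have := card_le_card (inter_subset_right (s₁ := S) (s₂ := B))
    rw [mem_Icc]; omega
  rw [← sum_fiberwise_of_maps_to hmaps]
  refine sum_congr rfl fun k hk ↦ ?_
  rw [sum_congr rfl fun S hS ↦ congrArg f (mem_filter.1 hS).2, sum_const,
    card_filter_powersetCard_card_inter_eq B ((mem_Icc.1 hk).2.trans (min_le_left _ _))]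

end Finset

namespace Equiv.Perm

variable {ι : Type*} [Fintype ι] [DecidableEq ι]

theorem card_filter_and_apply_eq_card_smul_inter (σ : Perm ι) (p q : ι → Prop)
    [DecidablePred p] [DecidablePred q] :
    #{t | p t ∧ q (σ t)} = #(σ • univ.filter p ∩ univ.filter q) := by
  rw [← card_smul_finset σ]
  congr 1
  ext s
  simp [← inv_smul_mem_iff]

theorem card_filter_apply_eq (σ : Perm ι) (q : ι → Prop) [DecidablePred q] :
    #{t | q (σ t)} = #{t | q t} := by
  rw [← card_smul_finset σ]
  congr 1
  ext s
  simp [← inv_smul_mem_iff]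

theorem sum_card_smul_inter_div_factorial {K : Type*} [Semifield K] [CharZero K]
    (A B : Finset ι) (f : ℕ → K) :
    (∑ σ : Perm ι, f #(σ • A ∩ B)) / (Fintype.card ι).factorial =
      ∑ k ∈ Icc (#A + #B - Fintype.card ι) (min #A #B),
        ((#B).choose k * (Fintype.card ι - #B).choose (#A - k) : K) /
          (Fintype.card ι).choose #A * f k := by
  have horbit : ∀ S, S ∈ powersetCard #A univ ↔ ∃ σ : Perm ι, σ • A = S := by
    refine fun S ↦ ⟨fun hS ↦ ?_, ?_⟩
    · obtain ⟨σ, hσ⟩ := (Set.powersetCard.isPretransitive (α := ι) (n := #A)).exists_smul_eq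
        ⟨A, rfl⟩ ⟨S, (mem_powersetCard.1 hS).2⟩
      exact ⟨σ, congrArg Subtype.val hσ⟩
    · rintro ⟨σ, rfl⟩
      exact mem_powersetCard.2 ⟨subset_univ _, card_smul_finset σ A⟩
  rw [← Fintype.card_perm, MulAction.sum_smul_div_card_eq A horbit fun S ↦ f #(S ∩ B),
    sum_powersetCard_card_inter, card_powersetCard, card_univ, sum_div]
  refine sum_congr rfl fun k _ ↦ ?_
  rw [nsmul_eq_mul]
  push_cast
  ring

end Equiv.Perm

theorem permExpMI_eq_hypergeom_sum_general {n : ℕ} {α β : Type*}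
    [Fintype α] [DecidableEq α] [Fintype β] [DecidableEq β]
    (x : Fin n → α) (y : Fin n → β) :
    permExpMI x y =
      ∑ v : α, ∑ w : β,
        ∑ k ∈ Finset.Icc (margCount x v + margCount y w - n)
            (min (margCount x v) (margCount y w)),
          ((Nat.choose (margCount y w) k *
              Nat.choose (n - margCount y w) (margCount x v - k) : ℝ) /
            (Nat.choose n (margCount x v) : ℝ)) *
            ((k : ℝ) / n) *
            Real.log (((k : ℝ) * n) / ((margCount x v : ℝ) * (margCount y w : ℝ))) := by
  simp only [permExpMI, empMI, Function.comp_apply, mul_sum]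
  rw [sum_comm]
  refine sum_congr rfl fun v _ ↦ ?_
  rw [sum_comm]
  refine sum_congr rfl fun w _ ↦ ?_
  have hhypergeom := Equiv.Perm.sum_card_smul_inter_div_factorial {t | x t = v} {t | y t = w}
    fun c ↦ (c / n : ℝ) * Real.log (c * n / (margCount x v * margCount y w))
  rw [Fintype.card_fin] at hhypergeom
  rw [← mul_sum, one_div_mul_eq_div]
  refine Eq.trans ?_ (hhypergeom.trans (sum_congr rfl fun k _ ↦ (mul_assoc _ _ _).symm))
  congr 1
  refine sum_congr rfl fun σ _ ↦ ?_
  simp only [Equiv.Perm.card_filter_and_apply_eq_card_smul_inter σ (x · = v) (y · = w),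
    Equiv.Perm.card_filter_apply_eq σ (y · = w)]
  rfl

/-- Closed form of the permutation-model expectation of the empirical mutual information:
`m̂₀(x,y) = Σ_v Σ_w Σ_{k=max(0,a(v)+b(w)−n)}^{min(a(v),b(w))}
  h(k; a(v), b(w), n) · (k/n) · log(k·n/(a(v)·b(w)))`,
where `h(k; a, b, n) = C(b,k)·C(n−b,a−k)/C(n,a)` is the hypergeometric pmf.
(In `ℕ`, truncated subtraction gives `a(v)+b(w)−n = max(0, a(v)+b(w)−n)`; the term
with `k = 0` vanishes since its factor `k/n` is `0`.) -/
theorem permExpMI_eq_hypergeom_sum {n : ℕ} (hn : 0 < n) {α β : Type*}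
    [Fintype α] [DecidableEq α] [Fintype β] [DecidableEq β]
    (x : Fin n → α) (y : Fin n → β) :
    permExpMI x y =
      ∑ v : α, ∑ w : β,
        ∑ k ∈ Finset.Icc (margCount x v + margCount y w - n)
            (min (margCount x v) (margCount y w)),
          ((Nat.choose (margCount y w) k *
              Nat.choose (n - margCount y w) (margCount x v - k) : ℝ) /
            (Nat.choose n (margCount x v) : ℝ)) *
            ((k : ℝ) / n) *
            Real.log (((k : ℝ) * n) / ((margCount x v : ℝ) * (margCount y w : ℝ))) :=
  permExpMI_eq_hypergeom_sum_general x y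
end

section
/- Let n > 0 and let α, β be finite types with decidable equality. Let x : Fin n → α and y : Fin n → β, and suppose the empirical entropy Ĥ(y) is strictly positive. Then the reliable fraction of information is bounded above by one: F̂₀(x;y) = (Î(x,y) − m̂₀(x,y)) / Ĥ(y) ≤ 1. -/
open Finset

/-- Empirical entropy `Ĥ(y) = −Σ_w (b(w)/n)·log(b(w)/n)`, terms with `b(w)=0` being `0`. -/
noncomputable def empEntropy {n : ℕ} {β : Type*} [Fintype β] [DecidableEq β]
    (y : Fin n → β) : ℝ :=
  -∑ w : β, (((univ.filter fun t => y t = w).card : ℝ) / n) *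
      Real.log (((univ.filter fun t => y t = w).card : ℝ) / n)

/-!
`Î(x,y) ≥ 0` is Gibbs' inequality for the joint distribution of `(x, y)` against the product of
its marginals, so `m̂₀(x,y)`, an average of such quantities, is nonnegative as well. On the other
hand `c(v,w) ≤ a(v)` bounds every term of `Î(x,y)` by `(c(v,w)/n)·log(n/b(w))`, and summing over
`v` gives `Î(x,y) ≤ Ĥ(y)`. Hence `Î − m̂₀ ≤ Ĥ`.
-/

theorem Real.sub_le_mul_log_div {p q : ℝ} (hp : 0 ≤ p) (hq : 0 ≤ q) (hpq : 0 < p → 0 < q) :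
    p - q ≤ p * Real.log (p / q) := by
  rcases hp.eq_or_lt with rfl | hp
  · simpa using hq
  have hq := hpq hp
  have h := mul_le_mul_of_nonneg_left (Real.one_sub_inv_le_log_of_pos (div_pos hp hq)) hp.le
  rwa [inv_div, mul_sub, mul_one, mul_div_cancel₀ q hp.ne'] at h

theorem Finset.sum_sub_sum_le_sum_mul_log_div {ι : Type*} (s : Finset ι) {p q : ι → ℝ}
    (hp : ∀ i ∈ s, 0 ≤ p i) (hq : ∀ i ∈ s, 0 ≤ q i) (hpq : ∀ i ∈ s, 0 < p i → 0 < q i) :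
    ∑ i ∈ s, p i - ∑ i ∈ s, q i ≤ ∑ i ∈ s, p i * Real.log (p i / q i) := by
  rw [← Finset.sum_sub_distrib]
  exact Finset.sum_le_sum fun i hi => Real.sub_le_mul_log_div (hp i hi) (hq i hi) (hpq i hi)

section Counts

variable {n : ℕ} {α β : Type*} [DecidableEq α] [DecidableEq β]

/-- The marginal count `a(v)` of the paper (`b(w)` when applied to `y`). -/
def fiberCount (x : Fin n → α) (v : α) : ℝ :=
  ((univ.filter fun t => x t = v).card : ℝ)

/-- The joint count `c(v,w)` of the paper. -/
def jointCount (x : Fin n → α) (y : Fin n → β) (v : α) (w : β) : ℝ :=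
  ((univ.filter fun t => x t = v ∧ y t = w).card : ℝ)

theorem fiberCount_nonneg (x : Fin n → α) (v : α) : 0 ≤ fiberCount x v := Nat.cast_nonneg _

theorem jointCount_nonneg (x : Fin n → α) (y : Fin n → β) (v : α) (w : β) :
    0 ≤ jointCount x y v w := Nat.cast_nonneg _

theorem fiberCount_le (x : Fin n → α) (v : α) : fiberCount x v ≤ n := by
  unfold fiberCount
  exact_mod_cast (card_filter_le _ _).trans_eq (card_fin n)

theorem jointCount_le_fiberCount_left (x : Fin n → α) (y : Fin n → β) (v : α) (w : β) :
    jointCount x y v w ≤ fiberCount x v := by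
  unfold jointCount fiberCount
  exact_mod_cast card_le_card fun t ht => by
    simp only [mem_filter] at ht ⊢
    exact ⟨ht.1, ht.2.1⟩

theorem jointCount_le_fiberCount_right (x : Fin n → α) (y : Fin n → β) (v : α) (w : β) :
    jointCount x y v w ≤ fiberCount y w := by
  unfold jointCount fiberCount
  exact_mod_cast card_le_card fun t ht => by
    simp only [mem_filter] at ht ⊢
    exact ⟨ht.1, ht.2.2⟩

theorem jointCount_mul_log_le (x : Fin n → α) (y : Fin n → β) (v : α) (w : β) :
    jointCount x y v w / n * Real.log (jointCount x y v w * n / (fiberCount x v * fiberCount y w))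
      ≤ jointCount x y v w / n * Real.log (n / fiberCount y w) := by
  rcases (jointCount_nonneg x y v w).eq_or_lt with hc | hc
  · simp [← hc]
  have ha := hc.trans_le (jointCount_le_fiberCount_left x y v w)
  have hb := hc.trans_le (jointCount_le_fiberCount_right x y v w)
  have hn := ha.trans_le (fiberCount_le x v)
  refine mul_le_mul_of_nonneg_left (Real.log_le_log (by positivity) ?_) (by positivity)
  rw [mul_div_mul_comm]
  exact mul_le_of_le_one_left (by positivity) ((div_le_one ha).2 (jointCount_le_fiberCount_left ..))

variable [Fintype α]

theorem sum_fiberCount (x : Fin n → α) : ∑ v, fiberCount x v = n := by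
  unfold fiberCount
  exact_mod_cast (card_eq_sum_card_fiberwise (f := x) (s := univ) (t := univ)
    fun t _ => mem_univ (x t)).symm.trans (card_fin n)

theorem sum_jointCount_left (x : Fin n → α) (y : Fin n → β) (w : β) :
    ∑ v, jointCount x y v w = fiberCount y w := by
  unfold jointCount fiberCount
  rw [card_eq_sum_card_fiberwise (f := x) (t := univ) fun t _ => mem_univ (x t)]
  push_cast
  simp only [filter_filter, and_comm]

theorem sum_jointCount [Fintype β] (x : Fin n → α) (y : Fin n → β) :
    ∑ v, ∑ w, jointCount x y v w = n := by
  rw [sum_comm]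
  simp only [sum_jointCount_left, sum_fiberCount]

theorem empMI_eq [Fintype β] (x : Fin n → α) (y : Fin n → β) :
    empMI x y = ∑ v, ∑ w, jointCount x y v w / n *
      Real.log (jointCount x y v w * n / (fiberCount x v * fiberCount y w)) := rfl

theorem empEntropy_eq [Fintype β] (y : Fin n → β) :
    empEntropy y = ∑ w, fiberCount y w / n * Real.log (n / fiberCount y w) := by
  simp only [empEntropy, fiberCount, ← sum_neg_distrib, ← mul_neg, ← Real.log_inv, inv_div]

end Counts

section MutualInformation

variable {n : ℕ} {α β : Type*} [Fintype α] [DecidableEq α] [Fintype β] [DecidableEq β]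

theorem empMI_nonneg (x : Fin n → α) (y : Fin n → β) : 0 ≤ empMI x y := by
  have gibbs := Finset.sum_sub_sum_le_sum_mul_log_div (univ ×ˢ univ : Finset (α × β))
    (p := fun vw => jointCount x y vw.1 vw.2)
    (q := fun vw => fiberCount x vw.1 * fiberCount y vw.2 / n)
    (fun _ _ => jointCount_nonneg ..)
    (fun _ _ => div_nonneg (mul_nonneg (fiberCount_nonneg ..) (fiberCount_nonneg ..)) n.cast_nonneg)
    (fun ⟨v, w⟩ _ hc => by
      have ha := hc.trans_le (jointCount_le_fiberCount_left x y v w)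
      have hb := hc.trans_le (jointCount_le_fiberCount_right x y v w)
      exact div_pos (mul_pos ha hb) (ha.trans_le (fiberCount_le x v)))
  simp only [sum_product] at gibbs
  have hq : ∑ v, ∑ w, fiberCount x v * fiberCount y w / n = n := by
    simp only [← sum_div, ← sum_mul_sum, sum_fiberCount, mul_self_div_self]
  rw [sum_jointCount, hq, sub_self] at gibbs
  have hterm : ∀ v w, jointCount x y v w / n *
      Real.log (jointCount x y v w * n / (fiberCount x v * fiberCount y w)) =
      jointCount x y v w * Real.log (jointCount x y v w / (fiberCount x v * fiberCount y w / n))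
        / n := fun v w => by
    rw [div_div_eq_mul_div, div_mul_eq_mul_div]
  rw [empMI_eq]
  simp only [hterm, ← sum_div]
  exact div_nonneg gibbs n.cast_nonneg

theorem empMI_le_empEntropy (x : Fin n → α) (y : Fin n → β) : empMI x y ≤ empEntropy y := by
  rw [empMI_eq, empEntropy_eq]
  calc _ ≤ ∑ v, ∑ w, jointCount x y v w / n * Real.log (n / fiberCount y w) :=
        sum_le_sum fun v _ => sum_le_sum fun w _ => jointCount_mul_log_le x y v w
    _ = _ := by
        rw [sum_comm]
        simp only [← sum_mul, ← sum_div, sum_jointCount_left]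

theorem permExpMI_nonneg (x : Fin n → α) (y : Fin n → β) : 0 ≤ permExpMI x y :=
  mul_nonneg (by positivity) (sum_nonneg fun σ _ => empMI_nonneg x (y ∘ σ))

end MutualInformation

theorem reliableFraction_le_one_general {n : ℕ} {α β : Type*}
    [Fintype α] [DecidableEq α] [Fintype β] [DecidableEq β]
    (x : Fin n → α) (y : Fin n → β) (hH : 0 < empEntropy y) :
    (empMI x y - permExpMI x y) / empEntropy y ≤ 1 := by
  rw [div_le_one hH]
  linarith [empMI_le_empEntropy x y, permExpMI_nonneg x y]

/-- The reliable fraction of information `F̂₀(x;y) = (Î(x,y) − m̂₀(x,y))/Ĥ(y)` is bounded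
above by one whenever `Ĥ(y) > 0`. -/
theorem reliableFraction_le_one {n : ℕ} (hn : 0 < n) {α β : Type*}
    [Fintype α] [DecidableEq α] [Fintype β] [DecidableEq β]
    (x : Fin n → α) (y : Fin n → β) (hH : 0 < empEntropy y) :
    (empMI x y - permExpMI x y) / empEntropy y ≤ 1 :=
  reliableFraction_le_one_general x y hH
end
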